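/- Let A be a unital associative ℂ-algebra. If D₁ and D₂ are first order operators of A into itself, then the commutator [D₁,D₂] = D₁∘D₂ − D₂∘D₁ is again a first order operator of A into itself. Hence L₁(A) is a Lie algebra under the commutator bracket. -/
import Mathlib


/-- First order operator of `A` into itself:
`D(fg) = D(f)g + fD(g) − fD(1)g`. -/
def IsFO {A : Type*} [Ring A] [Algebra ℂ A] (D : A →ₗ[ℂ] A) : Prop :=
  ∀ f g : A, D (f * g) = D f * g + f * D g - f * D 1 * g

/-- if `D₁, D₂` are first order operators of `A` into itself, so is the
commutator `[D₁,D₂] = D₁∘D₂ − D₂∘D₁`; hence `L₁(A)` is a Lie algebra under the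
commutator bracket. -/
theorem commutator_isFO {A : Type*} [Ring A] [Algebra ℂ A]
    (D₁ D₂ : A →ₗ[ℂ] A) (h₁ : IsFO D₁) (h₂ : IsFO D₂) :
    IsFO (D₁ ∘ₗ D₂ - D₂ ∘ₗ D₁) := by
  intro f g
  unfold IsFO at h₁ h₂
  simp only [LinearMap.sub_apply, LinearMap.comp_apply, h₁, h₂, map_add, map_sub, mul_one,
    one_mul]
  noncomm_ring
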